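/- arXiv:1404.4987 — 6 statements merged into one kernel-verified Lean document; each statement's English description precedes it below -/
import Mathlib

section
/- For every real c > 2.774 there exists an integer ℓ_c such that, with high probability as n → ∞, for every ℓ ≥ ℓ_c there is no graph homomorphism from G_{n,c/n} to the cycle C_{2ℓ+1}. -/
open Filter SimpleGraph

open scoped Classical in
/-- The probability, under the Erdős–Rényi random graph `G_{n,p}` on vertex set `Fin n`
(each of the `n.choose 2` potential edges present independently with probability `p`),
that the random graph satisfies the property `P`. -/
noncomputable def erProb (n : ℕ) (p : ℝ) (P : SimpleGraph (Fin n) → Prop) : ℝ :=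
  ∑ G : SimpleGraph (Fin n),
    if P G then p ^ G.edgeSet.ncard * (1 - p) ^ (n.choose 2 - G.edgeSet.ncard) else 0

/-!
A homomorphism `G →g C_{2ℓ+1}` yields a bipartition of the vertices with at most a `1/(2ℓ+1)`
fraction of the edges of `G` inside the parts: cut the cycle at its least used edge and colour
the vertices by parity along the remaining path. In `G(n, c/n)` and for a fixed bipartition,
Chernoff bounds show that at least `cn` edges cross it with probability at most
`exp((e - 5) c n / 4)`, while its at least `n (n - 2) / 4` inside pairs carry at most `cn/(2ℓ)`
edges with probability about `exp(-c n / 4)` once `ℓ` is large. For `c > 4 log 2` both beat the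
union bound over the `2 ^ n` bipartitions.
-/

open Finset Real

section Cut

variable {V : Type*} [Fintype V] [DecidableEq V]

def crossingPairs (A : Finset V) : Finset (Sym2 V) := (A ×ˢ Aᶜ).image Sym2.mk.uncurry

lemma mk_mem_crossingPairs {A : Finset V} {u v : V} :
    s(u, v) ∈ crossingPairs A ↔ (u ∈ A ↔ v ∉ A) := by
  simp only [crossingPairs, mem_image, mem_product, mem_compl, Prod.exists,
    Function.uncurry_apply_pair, Sym2.eq_iff]
  constructor
  · rintro ⟨a, b, ⟨ha, hb⟩, ⟨rfl, rfl⟩ | ⟨rfl, rfl⟩⟩ <;> tauto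
  · intro h
    by_cases hu : u ∈ A
    · exact ⟨u, v, ⟨hu, h.1 hu⟩, Or.inl ⟨rfl, rfl⟩⟩
    · exact ⟨v, u, ⟨not_not.1 (mt h.2 hu), hu⟩, Or.inr ⟨rfl, rfl⟩⟩

lemma crossingPairs_subset_edgeFinset_top (A : Finset V) :
    crossingPairs A ⊆ (⊤ : SimpleGraph V).edgeFinset := by
  simp only [crossingPairs, image_subset_iff, mem_product, mem_compl, Prod.forall]
  rintro u v ⟨hu, hv⟩
  simpa using ne_of_mem_of_not_mem hu hv

lemma four_mul_card_crossingPairs_le (A : Finset V) :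
    4 * #(crossingPairs A) ≤ Fintype.card V ^ 2 := by
  have hA : #A ≤ Fintype.card V := card_le_univ A
  have h : #(crossingPairs A) ≤ #A * (Fintype.card V - #A) := by
    rw [← card_compl, ← card_product]
    exact card_image_le
  zify [hA] at h ⊢
  nlinarith [sq_nonneg ((Fintype.card V : ℤ) - 2 * #A)]

lemma card_edgeFinset_top_sdiff_crossingPairs_ge (A : Finset V) :
    (Fintype.card V : ℝ) * (Fintype.card V - 2) / 4
      ≤ #((⊤ : SimpleGraph V).edgeFinset \ crossingPairs A) := by
  rw [card_sdiff_of_subset (crossingPairs_subset_edgeFinset_top A), Nat.cast_sub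
    (card_le_card (crossingPairs_subset_edgeFinset_top A)), card_edgeFinset_top_eq_card_choose_two,
    Nat.cast_choose_two]
  have h := four_mul_card_crossingPairs_le A
  have h' : (4 : ℝ) * #(crossingPairs A) ≤ (Fintype.card V : ℝ) ^ 2 := by exact_mod_cast h
  nlinarith

end Cut

section CycleGraph

variable {m : ℕ}

lemma SimpleGraph.cycleGraph_adj_iff_eq_add_one (hm : 1 ≤ m) {x y : Fin (m + 1)} :
    (cycleGraph (m + 1)).Adj x y ↔ y = x + 1 ∨ x = y + 1 := by
  obtain ⟨k, rfl⟩ : ∃ k, m = k + 1 := ⟨m - 1, by omega⟩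
  rw [cycleGraph_adj, sub_eq_iff_eq_add, sub_eq_iff_eq_add, add_comm 1 y, add_comm 1 x, or_comm]

lemma Fin.add_one_add_one_ne_self (hm : 2 ≤ m) (j : Fin (m + 1)) : j + 1 + 1 ≠ j := by
  rw [add_assoc, Ne, add_eq_left, Fin.ext_iff, Fin.val_add, Fin.val_one',
    Nat.one_mod_eq_one.2 (by omega), Fin.val_zero, Nat.mod_eq_of_lt (by omega)]
  omega

lemma Fin.sym2_mk_add_one_injective (hm : 2 ≤ m) :
    Function.Injective fun j : Fin (m + 1) => s(j, j + 1) := by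
  intro i j h
  rcases Sym2.eq_iff.1 h with ⟨h, -⟩ | ⟨rfl, h⟩
  · exact h
  · exact absurd h (Fin.add_one_add_one_ne_self hm j)

lemma Fin.val_add_one_sub_add_one {a j : Fin (m + 1)} (h : a ≠ j) :
    (a + 1 - (j + 1)).val = (a - (j + 1)).val + 1 := by
  rw [show a + 1 - (j + 1) = a - (j + 1) + 1 by abel, Fin.val_add_one, if_neg]
  intro ha
  apply h
  rw [sub_eq_iff_eq_add.1 ha, add_comm j, ← add_assoc, Fin.last_add_one, zero_add]

end CycleGraph

section Hom

variable {V : Type*} [Fintype V] [DecidableEq V] {G : SimpleGraph V} [DecidableRel G.Adj] {m : ℕ}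

/-- Among the `m + 1` edges of the cycle pick one, `s(j, j + 1)`, receiving at most a
`1 / (m + 1)` fraction of the edges of `G`; cutting the cycle there and 2-colouring the
vertices by the parity of their distance from `j + 1` along the resulting path, every other
edge of `G` crosses the colour classes. -/
theorem exists_crossingPairs_of_hom_cycleGraph (hm : 2 ≤ m) (f : G →g cycleGraph (m + 1)) :
    ∃ A : Finset V, m * #(G.edgeFinset \ crossingPairs A) ≤ #(G.edgeFinset ∩ crossingPairs A) := by
  set B : Fin (m + 1) → Finset (Sym2 V) := fun j => {e ∈ G.edgeFinset | e.map f = s(j, j + 1)}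
  have hB : ∑ j, #(B j) ≤ #G.edgeFinset := by
    rw [← card_biUnion fun i _ j _ hij => disjoint_filter.2 fun e _ hi hj =>
      hij (Fin.sym2_mk_add_one_injective hm (hi.symm.trans hj))]
    exact card_le_card (biUnion_subset.2 fun j _ => filter_subset _ _)
  obtain ⟨j, -, hj⟩ := exists_le_of_sum_le (s := univ) univ_nonempty
    (f := fun j => (m + 1) * #(B j)) (g := fun _ => #G.edgeFinset)
    (by simpa [← mul_sum] using Nat.mul_le_mul_left (m + 1) hB)
  set A : Finset V := {v | Even (f v - (j + 1)).val}
  have hstep : ∀ u v, f v = f u + 1 → s(u, v) ∉ crossingPairs A → f u = j := by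
    intro u v huv hcross
    by_contra hne
    apply hcross
    rw [mk_mem_crossingPairs]
    simp only [A, mem_filter, mem_univ, true_and, huv, Fin.val_add_one_sub_add_one hne,
      Nat.even_add_one, not_not]
  have hsub : G.edgeFinset \ crossingPairs A ⊆ B j := by
    intro e he
    rw [Finset.mem_sdiff] at he
    obtain ⟨hE, hcross⟩ := he
    refine mem_filter.2 ⟨hE, ?_⟩
    induction e using Sym2.ind with
    | _ u v =>
      rcases (cycleGraph_adj_iff_eq_add_one (by omega)).1 (f.map_adj (mem_edgeFinset.1 hE))
        with h | h
      · rw [Sym2.map_mk, h, hstep u v h hcross]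
      · rw [Sym2.eq_swap] at hcross
        rw [Sym2.map_mk, Sym2.eq_swap, h, hstep v u h hcross]
  refine ⟨A, ?_⟩
  have hsplit := card_sdiff_add_card_inter G.edgeFinset (crossingPairs A)
  have hle := card_le_card hsub
  nlinarith

end Hom

lemma tendsto_exp_mul_add_atTop_nhds_zero {a : ℝ} (ha : a < 0) (b : ℝ) :
    Tendsto (fun n : ℕ => exp (a * n + b)) atTop (nhds 0) :=
  tendsto_exp_atBot.comp (tendsto_atBot_add_const_right _ b
    (tendsto_natCast_atTop_atTop.const_mul_atTop_of_neg ha))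

namespace ErdosRenyi

open scoped Classical

variable {n : ℕ} {p : ℝ}

noncomputable def weight (n : ℕ) (p : ℝ) (G : SimpleGraph (Fin n)) : ℝ :=
  p ^ #G.edgeFinset * (1 - p) ^ (n.choose 2 - #G.edgeFinset)

noncomputable def expectation (n : ℕ) (p : ℝ) (X : SimpleGraph (Fin n) → ℝ) : ℝ :=
  ∑ G, X G * weight n p G

lemma erProb_eq_expectation (P : SimpleGraph (Fin n) → Prop) :
    erProb n p P = expectation n p (fun G => if P G then 1 else 0) := by
  refine Finset.sum_congr rfl fun G _ => ?_
  rw [weight, ← coe_edgeFinset, Set.ncard_coe_finset]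
  by_cases h : P G <;> simp [h]

lemma weight_nonneg (hp₀ : 0 ≤ p) (hp₁ : p ≤ 1) (G : SimpleGraph (Fin n)) :
    0 ≤ weight n p G :=
  mul_nonneg (pow_nonneg hp₀ _) (pow_nonneg (sub_nonneg.2 hp₁) _)

lemma expectation_mono (hp₀ : 0 ≤ p) (hp₁ : p ≤ 1) {X Y : SimpleGraph (Fin n) → ℝ}
    (h : ∀ G, X G ≤ Y G) : expectation n p X ≤ expectation n p Y :=
  sum_le_sum fun G _ => mul_le_mul_of_nonneg_right (h G) (weight_nonneg hp₀ hp₁ G)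

lemma expectation_const_mul (a : ℝ) (X : SimpleGraph (Fin n) → ℝ) :
    expectation n p (fun G => a * X G) = a * expectation n p X := by
  simp only [expectation, mul_assoc, mul_sum]

lemma expectation_sum {α : Type*} [Fintype α] (X : α → SimpleGraph (Fin n) → ℝ) :
    expectation n p (fun G => ∑ a, X a G) = ∑ a, expectation n p (X a) := by
  simp only [expectation, sum_mul]
  exact sum_comm

lemma sum_graph_eq_sum_powerset {M : Type*} [AddCommMonoid M] (F : Finset (Sym2 (Fin n)) → M) :
    ∑ G : SimpleGraph (Fin n), F G.edgeFinset
      = ∑ s ∈ (⊤ : SimpleGraph (Fin n)).edgeFinset.powerset, F s := by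
  refine sum_nbij' (fun G => G.edgeFinset) (fun s => fromEdgeSet s) (fun G _ => ?_)
    (fun _ _ => mem_univ _) (fun G _ => ?_) (fun s hs => ?_) (fun _ _ => rfl)
  · exact mem_powerset.2 (edgeFinset_mono le_top)
  · simp only [coe_edgeFinset, fromEdgeSet_edgeSet]
  · replace hs := mem_powerset.1 hs
    rw [← coe_inj, coe_edgeFinset, edgeSet_fromEdgeSet, sdiff_eq_left, Set.disjoint_left]
    intro e he hd
    exact (⊤ : SimpleGraph (Fin n)).not_isDiag_of_mem_edgeSet (by simpa using hs he) hd

lemma expectation_prod (f : Sym2 (Fin n) → ℝ) :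
    expectation n p (fun G => ∏ e ∈ G.edgeFinset, f e)
      = ∏ e ∈ (⊤ : SimpleGraph (Fin n)).edgeFinset, (f e * p + (1 - p)) := by
  rw [prod_add, expectation]
  simp only [weight]
  rw [sum_graph_eq_sum_powerset
    (fun s => (∏ e ∈ s, f e) * (p ^ #s * (1 - p) ^ (n.choose 2 - #s)))]
  refine sum_congr rfl fun s hs => ?_
  rw [prod_mul_distrib, prod_const, prod_const, card_sdiff_of_subset (mem_powerset.1 hs),
    card_edgeFinset_top_eq_card_choose_two, Fintype.card_fin, mul_assoc]

lemma expectation_one : expectation n p (fun _ => 1) = 1 := by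
  simpa using expectation_prod (n := n) (p := p) (fun _ => 1)

lemma erProb_nonneg (hp₀ : 0 ≤ p) (hp₁ : p ≤ 1) (P : SimpleGraph (Fin n) → Prop) :
    0 ≤ erProb n p P := by
  rw [erProb_eq_expectation]
  exact sum_nonneg fun G _ =>
    mul_nonneg (by dsimp only; split_ifs <;> norm_num) (weight_nonneg hp₀ hp₁ G)

lemma erProb_eq_one_sub_erProb_not (P : SimpleGraph (Fin n) → Prop) :
    erProb n p P = 1 - erProb n p (fun G => ¬ P G) := by
  rw [erProb_eq_expectation, erProb_eq_expectation, eq_sub_iff_add_eq]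
  conv_rhs => rw [← expectation_one (n := n) (p := p)]
  rw [expectation, expectation, expectation, ← sum_add_distrib]
  refine sum_congr rfl fun G _ => ?_
  by_cases h : P G <;> simp [h]

lemma erProb_mono (hp₀ : 0 ≤ p) (hp₁ : p ≤ 1) {P Q : SimpleGraph (Fin n) → Prop}
    (h : ∀ G, P G → Q G) : erProb n p P ≤ erProb n p Q := by
  simp only [erProb_eq_expectation]
  refine expectation_mono hp₀ hp₁ fun G => ?_
  by_cases hP : P G <;> simp [hP, h G, apply_ite]

lemma erProb_or_le (hp₀ : 0 ≤ p) (hp₁ : p ≤ 1) (P Q : SimpleGraph (Fin n) → Prop) :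
    erProb n p (fun G => P G ∨ Q G) ≤ erProb n p P + erProb n p Q := by
  simp only [erProb_eq_expectation, expectation, ← sum_add_distrib, ← add_mul]
  refine sum_le_sum fun G _ => mul_le_mul_of_nonneg_right ?_ (weight_nonneg hp₀ hp₁ G)
  by_cases hP : P G <;> by_cases hQ : Q G <;> simp [hP, hQ]

lemma erProb_exists_le {α : Type*} [Fintype α] (hp₀ : 0 ≤ p) (hp₁ : p ≤ 1)
    (Q : α → SimpleGraph (Fin n) → Prop) :
    erProb n p (fun G => ∃ a, Q a G) ≤ ∑ a, erProb n p (Q a) := by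
  simp only [erProb_eq_expectation, ← expectation_sum]
  refine expectation_mono hp₀ hp₁ fun G => ?_
  split_ifs with h
  · obtain ⟨a, ha⟩ := h
    exact (if_pos ha).symm.le.trans
      (single_le_sum (f := fun b => if Q b G then (1 : ℝ) else 0)
        (fun b _ => by split_ifs <;> norm_num) (mem_univ a))
  · exact sum_nonneg fun b _ => by split_ifs <;> norm_num

/-- Chernoff bound: an upper tail for `0 ≤ θ`, a lower tail for `θ ≤ 0`. -/
theorem erProb_le_exp_of_mul_le (hp₀ : 0 ≤ p) (hp₁ : p ≤ 1) {I : Finset (Sym2 (Fin n))}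
    (hI : I ⊆ (⊤ : SimpleGraph (Fin n)).edgeFinset) (θ t : ℝ) {P : SimpleGraph (Fin n) → Prop}
    (hP : ∀ G, P G → θ * t ≤ θ * #(G.edgeFinset ∩ I)) :
    erProb n p P ≤ exp ((exp θ - 1) * p * #I - θ * t) := by
  set f : Sym2 (Fin n) → ℝ := fun e => if e ∈ I then exp θ else 1
  have hprod : ∀ s : Finset (Sym2 (Fin n)), ∏ e ∈ s, f e = exp (θ * #(s ∩ I)) := fun s => by
    rw [prod_ite_mem, prod_const, ← exp_nat_mul, mul_comm]
  have hmgf : ∏ e ∈ (⊤ : SimpleGraph (Fin n)).edgeFinset, (f e * p + (1 - p))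
      ≤ exp ((exp θ - 1) * p * #I) := by
    have hfactor : ∀ e, f e * p + (1 - p) = if e ∈ I then exp θ * p + (1 - p) else 1 := fun e => by
      simp only [f]; split_ifs <;> ring
    simp only [hfactor, prod_ite_mem, inter_eq_right.2 hI, prod_const]
    rw [mul_comm _ (#I : ℝ), exp_nat_mul]
    refine pow_le_pow_left₀ (by nlinarith [exp_pos θ]) ?_ _
    linarith [add_one_le_exp ((exp θ - 1) * p)]
  calc erProb n p P
      ≤ expectation n p (fun G => exp (-(θ * t)) * ∏ e ∈ G.edgeFinset, f e) := by
        rw [erProb_eq_expectation]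
        refine expectation_mono hp₀ hp₁ fun G => ?_
        rw [hprod, ← exp_add]
        split_ifs with h
        · exact one_le_exp (by linarith [hP G h])
        · exact (exp_pos _).le
    _ = exp (-(θ * t)) * ∏ e ∈ (⊤ : SimpleGraph (Fin n)).edgeFinset, (f e * p + (1 - p)) := by
        rw [expectation_const_mul, expectation_prod]
    _ ≤ exp ((exp θ - 1) * p * #I - θ * t) := by
        rw [sub_eq_neg_add ((exp θ - 1) * p * #I), exp_add]
        exact mul_le_mul_of_nonneg_left hmgf (exp_pos _).le

lemma erProb_le_card_inter_crossingPairs_le (hp₀ : 0 ≤ p) (hp₁ : p ≤ 1) (A : Finset (Fin n))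
    (t : ℝ) :
    erProb n p (fun G => t ≤ #(G.edgeFinset ∩ crossingPairs A))
      ≤ exp ((exp 1 - 1) * p * (n ^ 2 / 4) - t) := by
  refine (erProb_le_exp_of_mul_le hp₀ hp₁ (crossingPairs_subset_edgeFinset_top A) 1 t
    (by simp only [one_mul]; exact fun _ => id)).trans ?_
  have h : (4 : ℝ) * #(crossingPairs A) ≤ n ^ 2 := by
    exact_mod_cast (Fintype.card_fin n ▸ four_mul_card_crossingPairs_le A)
  have he : 0 ≤ (exp 1 - 1) * p := mul_nonneg (by linarith [add_one_le_exp 1]) hp₀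
  rw [one_mul, exp_le_exp]
  nlinarith

lemma erProb_card_sdiff_crossingPairs_le_le (hp₀ : 0 ≤ p) (hp₁ : p ≤ 1) (A : Finset (Fin n))
    {τ : ℝ} (hτ : 0 ≤ τ) (t : ℝ) :
    erProb n p (fun G => #(G.edgeFinset \ crossingPairs A) ≤ t)
      ≤ exp (τ * t - (1 - exp (-τ)) * p * (n * (n - 2) / 4)) := by
  have hI := sdiff_subset (s := (⊤ : SimpleGraph (Fin n)).edgeFinset) (t := crossingPairs A)
  refine (erProb_le_exp_of_mul_le hp₀ hp₁ hI (-τ) t fun G hG => ?_).trans ?_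
  · rw [← inter_sdiff_assoc, inter_eq_left.2 (edgeFinset_mono le_top)]
    nlinarith
  · have h := Fintype.card_fin n ▸ card_edgeFinset_top_sdiff_crossingPairs_ge A
    have he : 0 ≤ (1 - exp (-τ)) * p :=
      mul_nonneg (sub_nonneg.2 (exp_le_one_iff.2 (neg_nonpos.2 hτ))) hp₀
    rw [exp_le_exp]
    nlinarith

/-- For the bipartition given by the homomorphism, either at least `t` edges cross it or at most
`t / (2 L)` lie inside its parts. -/
theorem erProb_not_forall_isEmpty_hom_cycleGraph_le (hp₀ : 0 ≤ p) (hp₁ : p ≤ 1) {L : ℕ}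
    (hL : 1 ≤ L) {τ : ℝ} (hτ : 0 ≤ τ) (t : ℝ) :
    erProb n p (fun G => ¬ ∀ ℓ : ℕ, L ≤ ℓ → IsEmpty (G →g cycleGraph (2 * ℓ + 1)))
      ≤ 2 ^ n * (exp ((exp 1 - 1) * p * (n ^ 2 / 4) - t)
        + exp (τ * (t / (2 * L)) - (1 - exp (-τ)) * p * (n * (n - 2) / 4))) := by
  have hcut : ∀ G : SimpleGraph (Fin n),
      (¬ ∀ ℓ : ℕ, L ≤ ℓ → IsEmpty (G →g cycleGraph (2 * ℓ + 1))) →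
      ∃ A : Finset (Fin n), t ≤ #(G.edgeFinset ∩ crossingPairs A)
        ∨ #(G.edgeFinset \ crossingPairs A) ≤ t / (2 * L) := by
    intro G hG
    simp only [not_forall, not_isEmpty_iff] at hG
    obtain ⟨ℓ, hℓ, ⟨f⟩⟩ := hG
    obtain ⟨A, hA⟩ := exists_crossingPairs_of_hom_cycleGraph (by omega) f
    refine ⟨A, or_iff_not_imp_left.2 fun hlt => ?_⟩
    have hA' : (2 * L : ℝ) * #(G.edgeFinset \ crossingPairs A)
        ≤ #(G.edgeFinset ∩ crossingPairs A) := by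
      exact_mod_cast (Nat.mul_le_mul_right _ (by omega)).trans hA
    rw [le_div_iff₀' (by positivity)]
    linarith
  calc _ ≤ ∑ A : Finset (Fin n), erProb n p (fun G => t ≤ #(G.edgeFinset ∩ crossingPairs A)
          ∨ #(G.edgeFinset \ crossingPairs A) ≤ t / (2 * L)) :=
        (erProb_mono hp₀ hp₁ hcut).trans (erProb_exists_le hp₀ hp₁ _)
    _ ≤ ∑ _A : Finset (Fin n), (exp ((exp 1 - 1) * p * (n ^ 2 / 4) - t)
        + exp (τ * (t / (2 * L)) - (1 - exp (-τ)) * p * (n * (n - 2) / 4))) :=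
        sum_le_sum fun A _ => (erProb_or_le hp₀ hp₁ _ _).trans (add_le_add
          (erProb_le_card_inter_crossingPairs_le hp₀ hp₁ A t)
          (erProb_card_sdiff_crossingPairs_le_le hp₀ hp₁ A hτ _))
    _ = _ := by simp [mul_add]

lemma erProb_not_forall_isEmpty_hom_cycleGraph_le_exp {c : ℝ} (hc : 0 ≤ c) (hn : 0 < n)
    (hcn : c ≤ n) {L : ℕ} (hL : 1 ≤ L) {τ : ℝ} (hτ : 0 ≤ τ) :
    erProb n (c / n) (fun G => ¬ ∀ ℓ : ℕ, L ≤ ℓ → IsEmpty (G →g cycleGraph (2 * ℓ + 1)))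
      ≤ exp ((log 2 + ((exp 1 - 1) / 4 - 1) * c) * n)
        + exp ((log 2 + τ * c / (2 * L) - (1 - exp (-τ)) * c / 4) * n
          + (1 - exp (-τ)) * c / 2) := by
  have hn' : (0 : ℝ) < n := by exact_mod_cast hn
  refine (erProb_not_forall_isEmpty_hom_cycleGraph_le (div_nonneg hc hn'.le)
    ((div_le_one hn').2 hcn) hL hτ (c * n)).trans_eq ?_
  rw [← exp_log (two_pos : (0 : ℝ) < 2), ← exp_nat_mul, exp_log two_pos, mul_add, ← exp_add,
    ← exp_add]
  congr 2
  · field_simp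
  · field_simp
    ring

/-- Any `c > 4 log 2` beats the `2 ^ n` bipartitions: with `ε = 1/4 - log 2 / c`, take
`exp (-τ) = ε` and `L > τ / ε`. -/
lemma exists_lowerTail_exponent_neg {c : ℝ} (hc : 4 * log 2 < c) :
    ∃ τ : ℝ, 0 ≤ τ ∧ ∃ L : ℕ, 1 ≤ L ∧ log 2 + τ * c / (2 * L) - (1 - exp (-τ)) * c / 4 < 0 := by
  have hlog := log_pos one_lt_two
  have hc₀ : 0 < c := by linarith
  set ε := 1 / 4 - log 2 / c with hε
  have hε₀ : 0 < ε := by rw [hε, sub_pos, div_lt_iff₀ hc₀]; linarith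
  have hε₁ : ε ≤ 1 := by have := div_pos hlog hc₀; linarith
  refine ⟨-log ε, neg_nonneg.2 (log_nonpos hε₀.le hε₁), ⌈-log ε / ε⌉₊ + 1, by omega, ?_⟩
  have hL : -log ε / ε < (⌈-log ε / ε⌉₊ + 1 : ℕ) := by
    push_cast; linarith [Nat.le_ceil (-log ε / ε)]
  set L : ℝ := ((⌈-log ε / ε⌉₊ + 1 : ℕ) : ℝ)
  have hL₀ : 0 < L := lt_of_le_of_lt (div_nonneg (neg_nonneg.2 (log_nonpos hε₀.le hε₁)) hε₀.le) hL
  have hτ : -log ε / (2 * L) < ε / 2 := by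
    rw [div_lt_iff₀ (by positivity)]
    rw [div_lt_iff₀ hε₀] at hL
    linarith
  have h2 : log 2 = c / 4 - c * ε := by rw [hε]; field_simp; ring
  rw [neg_neg, exp_log hε₀, mul_comm _ c, mul_div_assoc, h2]
  nlinarith [mul_lt_mul_of_pos_left hτ hc₀]

theorem tendsto_erProb_forall_isEmpty_hom_cycleGraph {c : ℝ} (hc : 4 * log 2 < c) :
    ∃ L : ℕ, Tendsto (fun n : ℕ => erProb n (c / n) (fun G =>
      ∀ ℓ : ℕ, L ≤ ℓ → IsEmpty (G →g cycleGraph (2 * ℓ + 1)))) atTop (nhds 1) := by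
  have hc₀ : 0 ≤ c := by linarith [log_pos one_lt_two]
  obtain ⟨τ, hτ, L, hL, ha₂⟩ := exists_lowerTail_exponent_neg hc
  have ha₁ : log 2 + ((exp 1 - 1) / 4 - 1) * c < 0 := by
    nlinarith [exp_one_lt_d9, log_pos one_lt_two]
  refine ⟨L, ?_⟩
  have hlarge : ∀ᶠ n : ℕ in atTop, 0 < n ∧ c ≤ n := by
    filter_upwards [eventually_gt_atTop ⌈c⌉₊] with n hn
    exact ⟨by omega, (Nat.le_ceil c).trans (by exact_mod_cast hn.le)⟩
  have hexp := (tendsto_exp_mul_add_atTop_nhds_zero ha₁ 0).add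
    (tendsto_exp_mul_add_atTop_nhds_zero ha₂ ((1 - exp (-τ)) * c / 2))
  simp only [add_zero] at hexp
  have hbad := squeeze_zero'
    (hlarge.mono fun n hn => erProb_nonneg (div_nonneg hc₀ (Nat.cast_nonneg n))
      ((div_le_one (by exact_mod_cast hn.1)).2 hn.2) _)
    (hlarge.mono fun n hn => erProb_not_forall_isEmpty_hom_cycleGraph_le_exp hc₀ hn.1 hn.2 hL hτ)
    hexp
  have hgood := (tendsto_const_nhds (x := (1 : ℝ))).sub hbad
  rw [sub_zero] at hgood
  exact hgood.congr fun n => (erProb_eq_one_sub_erProb_not _).symm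

end ErdosRenyi

/-- For every real `c > 2.774` there exists `ℓ_c` such that w.h.p. there is no homomorphism
from `G_{n,c/n}` to `C_{2ℓ+1}` for every `ℓ ≥ ℓ_c`. -/
theorem statement1 (c : ℝ) (hc : 2.774 < c) :
    ∃ ℓc : ℕ,
      Tendsto
        (fun n : ℕ => erProb n (c / n) (fun G =>
          ∀ ℓ : ℕ, ℓc ≤ ℓ → IsEmpty (G →g cycleGraph (2 * ℓ + 1))))
        atTop (nhds 1) :=
  ErdosRenyi.tendsto_erProb_forall_isEmpty_hom_cycleGraph (by linarith [log_two_lt_d9])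
end

section
/- Let ℓ ≥ 1 be an integer and let G be a graph whose edge set is partitioned as F ∪ M, where F is a forest and the distance in F between any two distinct edges of M is at least 4ℓ−2. If G contains no odd cycle of length at most 2ℓ−1, then G admits a graph homomorphism to the cycle C_{2ℓ+1}. -/
/-!
Properly 2-colour the forest `F` with the adjacent colours `0, 1` of `C_{2ℓ+1}`; this respects
every edge of `F` and every bichromatic edge of `M`. A monochromatic edge `ab ∈ M` is repaired
inside the `F`-ball of radius `2ℓ - 2` around `a`: a vertex at distance `d` from `a` gets the
colour reached from `c(a)` after `d + 1` steps the long way round the cycle, away from `1 - c(a)`.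
The long way arrives at `1 - c(a)` after `2ℓ - 1` steps, and that is the colour of the 2-colouring
at odd distance from `a`, so the patch fits its surroundings; and `a` gets a neighbour of
`c(a) = c(b)`. The vertex `b` lies outside the ball: an even `F`-path from `a` to `b` closes an odd
cycle with `ab`, so it has length at least `2ℓ`. The `4ℓ - 2` separation keeps the balls apart and
away from the endpoints of all other edges of `M`.
-/

namespace SimpleGraph

variable {V : Type*} {F G : SimpleGraph V} {u v : V}

section CycleColors

variable {ℓ : ℕ}

lemma cycleGraph_adj_of_sub_eq_one (hℓ : 1 ≤ ℓ) {x y : ZMod (2 * ℓ + 1)}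
    (h : x - y = 1) : (cycleGraph (2 * ℓ + 1)).Adj x y := by
  have : Fact (1 < 2 * ℓ + 1) := ⟨by omega⟩
  exact cycleGraph_adj'.mpr (Or.inl ((congrArg ZMod.val h).trans (ZMod.val_one _)))

-- `d + 1` steps from `b` round the cycle, away from `!b`.
def ballColor (n : ℕ) (b : Bool) (d : ℕ) : ZMod n := if b then d + 2 else -(d + 1)

lemma adj_ballColor_succ (hℓ : 1 ≤ ℓ) (b : Bool) (d : ℕ) :
    (cycleGraph (2 * ℓ + 1)).Adj (ballColor (2 * ℓ + 1) b d)
      (ballColor (2 * ℓ + 1) b (d + 1)) := by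
  cases b
  · exact cycleGraph_adj_of_sub_eq_one hℓ (by simp only [ballColor]; push_cast; ring)
  · exact (cycleGraph_adj_of_sub_eq_one hℓ (by simp only [ballColor]; push_cast; ring)).symm

lemma adj_ballColor_of_add_two_eq (hℓ : 1 ≤ ℓ) (b : Bool) {d : ℕ} (hd : d + 2 = 2 * ℓ) :
    (cycleGraph (2 * ℓ + 1)).Adj (ballColor (2 * ℓ + 1) b d) ((!b).toNat : ZMod (2 * ℓ + 1)) := by
  have hzero : ((2 * ℓ + 1 : ℕ) : ZMod (2 * ℓ + 1)) = 0 := ZMod.natCast_self _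
  have hd' : ((d + 2 : ℕ) : ZMod (2 * ℓ + 1)) = ((2 * ℓ : ℕ) : ZMod (2 * ℓ + 1)) := by rw [hd]
  push_cast at hzero hd'
  cases b
  · exact cycleGraph_adj_of_sub_eq_one hℓ (by simp [ballColor]; linear_combination -hd' - hzero)
  · exact (cycleGraph_adj_of_sub_eq_one hℓ
      (by simp [ballColor]; linear_combination -hd' - hzero)).symm

lemma adj_ballColor_zero (hℓ : 1 ≤ ℓ) (b : Bool) :
    (cycleGraph (2 * ℓ + 1)).Adj (ballColor (2 * ℓ + 1) b 0) (b.toNat : ZMod (2 * ℓ + 1)) := by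
  cases b
  · exact (cycleGraph_adj_of_sub_eq_one hℓ (by simp [ballColor])).symm
  · exact cycleGraph_adj_of_sub_eq_one hℓ (by simp [ballColor]; ring)

lemma adj_toNat_not (hℓ : 1 ≤ ℓ) (b : Bool) :
    (cycleGraph (2 * ℓ + 1)).Adj (b.toNat : ZMod (2 * ℓ + 1))
      ((!b).toNat : ZMod (2 * ℓ + 1)) := by
  cases b
  · exact (cycleGraph_adj_of_sub_eq_one hℓ (by simp)).symm
  · exact cycleGraph_adj_of_sub_eq_one hℓ (by simp)

end CycleColors

lemma Coloring.even_dist_iff_eq (c : G.Coloring Bool) (h : G.Reachable u v) :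
    Even (G.dist u v) ↔ c u = c v := by
  obtain ⟨p, hp⟩ := h.exists_walk_length_eq_dist
  rw [← hp, c.even_length_iff_congr p, ← Bool.eq_iff_iff]

lemma two_mul_le_dist_of_even {ℓ : ℕ} (hFG : F ≤ G)
    (hodd : ∀ (u : V) (w : G.Walk u u), w.IsCycle → Odd w.length → ¬ w.length ≤ 2 * ℓ - 1)
    (hadj : G.Adj u v) (hnF : ¬ F.Adj u v) (hr : F.Reachable u v) (he : Even (F.dist u v)) :
    2 * ℓ ≤ F.dist u v := by
  obtain ⟨p, hp, hlen⟩ := hr.symm.exists_path_of_dist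
  rw [dist_comm] at he ⊢
  have hcycle : (Walk.cons hadj (p.mapLe hFG)).IsCycle := by
    rw [Walk.cons_isCycle_iff, Walk.edges_mapLe_eq_edges]
    exact ⟨hp.mapLe hFG, fun h => hnF (p.adj_of_mem_edges h)⟩
  have hshort := hodd u _ hcycle (by simpa [hlen] using he.add_one)
  simp only [Walk.length_cons, Walk.length_mapLe, hlen] at hshort
  obtain ⟨k, hk⟩ := he
  omega

def PairwiseFar (F : SimpleGraph V) (k : ℕ) (M : Set (Sym2 V)) : Prop :=
  ∀ e₁ ∈ M, ∀ e₂ ∈ M, e₁ ≠ e₂ → ∀ x ∈ e₁, ∀ y ∈ e₂, ∀ w : F.Walk x y, k ≤ w.length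

namespace PairwiseFar

variable {k : ℕ} {M N : Set (Sym2 V)} {e₁ e₂ : Sym2 V} {x y : V}

lemma mono (h : PairwiseFar F k M) (hNM : N ⊆ M) : PairwiseFar F k N :=
  fun e₁ he₁ e₂ he₂ => h e₁ (hNM he₁) e₂ (hNM he₂)

lemma le_dist (h : PairwiseFar F k M) (he₁ : e₁ ∈ M) (he₂ : e₂ ∈ M) (hne : e₁ ≠ e₂)
    (hx : x ∈ e₁) (hy : y ∈ e₂) (hr : F.Reachable x y) : k ≤ F.dist x y := by
  obtain ⟨p, hp⟩ := hr.exists_walk_length_eq_dist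
  exact hp ▸ h e₁ he₁ e₂ he₂ hne x hx y hy p

lemma eq_of_near {r : ℕ} (h : PairwiseFar F k M) (hrk : 2 * r + 1 < k) (he₁ : e₁ ∈ M)
    (he₂ : e₂ ∈ M) (hx : x ∈ e₁) (hy : y ∈ e₂) (hxu : F.Reachable x u) (hdu : F.dist x u ≤ r)
    (hyv : F.Reachable y v) (hdv : F.dist y v ≤ r) (p : F.Walk u v) (hp : p.length ≤ 1) :
    e₁ = e₂ := by
  by_contra hne
  obtain ⟨q₁, hq₁⟩ := hxu.exists_walk_length_eq_dist
  obtain ⟨q₂, hq₂⟩ := hyv.exists_walk_length_eq_dist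
  have := h e₁ he₁ e₂ he₂ hne x hx y hy ((q₁.append p).append q₂.reverse)
  simp only [Walk.length_append, Walk.length_reverse] at this
  omega

end PairwiseFar

def monochromaticEdges (c : F.Coloring Bool) (M : Set (Sym2 V)) : Set (Sym2 V) :=
  {e ∈ M | ∀ x ∈ e, ∀ y ∈ e, c x = c y}

section Recolor

variable (c : F.Coloring Bool) (D : Set (Sym2 V)) (ℓ : ℕ)

open Classical in
noncomputable def recolor (v : V) : ZMod (2 * ℓ + 1) :=
  if h : ∃ e ∈ D, F.Reachable e.out.1 v ∧ F.dist e.out.1 v ≤ 2 * ℓ - 2 then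
    ballColor (2 * ℓ + 1) (c h.choose.out.1) (F.dist h.choose.out.1 v)
  else (c v).toNat

variable {c D ℓ} {e : Sym2 V}

lemma recolor_of_near (hℓ : 1 ≤ ℓ) (hD : PairwiseFar F (4 * ℓ - 2) D) (he : e ∈ D)
    (hr : F.Reachable e.out.1 v) (hd : F.dist e.out.1 v ≤ 2 * ℓ - 2) :
    recolor c D ℓ v = ballColor (2 * ℓ + 1) (c e.out.1) (F.dist e.out.1 v) := by
  have hex : ∃ e ∈ D, F.Reachable e.out.1 v ∧ F.dist e.out.1 v ≤ 2 * ℓ - 2 := ⟨e, he, hr, hd⟩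
  obtain ⟨he', hr', hd'⟩ := hex.choose_spec
  have heq : hex.choose = e := hD.eq_of_near (by omega) he' he (Sym2.out_fst_mem _)
    (Sym2.out_fst_mem _) hr' hd' hr hd Walk.nil (Nat.zero_le 1)
  rw [recolor, dif_pos hex, heq]

lemma recolor_of_far (hfar : ∀ e ∈ D, F.Reachable e.out.1 v → 2 * ℓ - 2 < F.dist e.out.1 v) :
    recolor c D ℓ v = (c v).toNat := by
  rw [recolor, dif_neg]
  rintro ⟨e, he, hr, hd⟩
  exact (hfar e he hr).not_ge hd

lemma adj_recolor_of_near (hF : F.IsAcyclic) (hℓ : 1 ≤ ℓ) (hD : PairwiseFar F (4 * ℓ - 2) D)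
    (huv : F.Adj u v) (he : e ∈ D) (hr : F.Reachable e.out.1 u)
    (hd : F.dist e.out.1 u ≤ 2 * ℓ - 2) :
    (cycleGraph (2 * ℓ + 1)).Adj (recolor c D ℓ u) (recolor c D ℓ v) := by
  have hrv : F.Reachable e.out.1 v := hr.trans huv.reachable
  rw [recolor_of_near hℓ hD he hr hd]
  rcases hF.dist_eq_dist_add_one_of_adj_of_reachable e.out.1 huv hr with hu | hv
  · rw [recolor_of_near hℓ hD he hrv (by omega), hu]
    exact (adj_ballColor_succ hℓ _ _).symm
  by_cases hnear : F.dist e.out.1 v ≤ 2 * ℓ - 2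
  · rw [recolor_of_near hℓ hD he hrv hnear, hv]
    exact adj_ballColor_succ hℓ _ _
  have hfar : ∀ e' ∈ D, F.Reachable e'.out.1 v → 2 * ℓ - 2 < F.dist e'.out.1 v := by
    intro e' he' hr'
    by_contra! hd'
    obtain rfl := hD.eq_of_near (by omega) he he' (Sym2.out_fst_mem _) (Sym2.out_fst_mem _)
      hr hd hr' hd' huv.toWalk le_rfl
    exact hnear hd'
  have hcv : c v = !c e.out.1 := by
    have hodd : ¬ Even (F.dist e.out.1 v) := Nat.not_even_iff_odd.mpr ⟨ℓ - 1, by omega⟩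
    exact Bool.eq_not.mpr fun h => hodd ((c.even_dist_iff_eq hrv).mpr h.symm)
  rw [recolor_of_far hfar, hcv]
  exact adj_ballColor_of_add_two_eq hℓ _ (by omega)

lemma adj_recolor_of_adj (hF : F.IsAcyclic) (hℓ : 1 ≤ ℓ) (hD : PairwiseFar F (4 * ℓ - 2) D)
    (huv : F.Adj u v) : (cycleGraph (2 * ℓ + 1)).Adj (recolor c D ℓ u) (recolor c D ℓ v) := by
  by_cases hu : ∃ e ∈ D, F.Reachable e.out.1 u ∧ F.dist e.out.1 u ≤ 2 * ℓ - 2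
  · obtain ⟨e, he, hr, hd⟩ := hu
    exact adj_recolor_of_near hF hℓ hD huv he hr hd
  by_cases hv : ∃ e ∈ D, F.Reachable e.out.1 v ∧ F.dist e.out.1 v ≤ 2 * ℓ - 2
  · obtain ⟨e, he, hr, hd⟩ := hv
    exact (adj_recolor_of_near hF hℓ hD huv.symm he hr hd).symm
  push Not at hu hv
  rw [recolor_of_far hu, recolor_of_far hv, Bool.eq_not.mpr (c.valid huv).symm]
  exact adj_toNat_not hℓ _

lemma recolor_of_mem_of_far (hℓ : 1 ≤ ℓ) (hM : PairwiseFar F (4 * ℓ - 2) M)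
    (hDM : D ⊆ M) {e₀ : Sym2 V} (he₀ : e₀ ∈ M) (hv : v ∈ e₀)
    (hfar : e₀ ∈ D → F.Reachable e₀.out.1 v → 2 * ℓ - 2 < F.dist e₀.out.1 v) :
    recolor c D ℓ v = (c v).toNat := by
  refine recolor_of_far fun e he hr => ?_
  by_cases hee : e = e₀
  · subst hee
    exact hfar he hr
  · have := hM.le_dist (hDM he) he₀ hee (Sym2.out_fst_mem e) hv hr
    omega

variable {M : Set (Sym2 V)}

lemma adj_recolor_out_of_monochromatic (hℓ : 1 ≤ ℓ) (hM : PairwiseFar F (4 * ℓ - 2) M)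
    (hFG : F ≤ G)
    (hodd : ∀ (u : V) (w : G.Walk u u), w.IsCycle → Odd w.length → ¬ w.length ≤ 2 * ℓ - 1)
    {e : Sym2 V} (he : e ∈ monochromaticEdges c M) (hadj : G.Adj e.out.1 e.out.2)
    (hnF : ¬ F.Adj e.out.1 e.out.2) :
    (cycleGraph (2 * ℓ + 1)).Adj (recolor c (monochromaticEdges c M) ℓ e.out.1)
      (recolor c (monochromaticEdges c M) ℓ e.out.2) := by
  have hDM : monochromaticEdges c M ⊆ M := fun _ h => h.1
  have hc : c e.out.1 = c e.out.2 := he.2 _ (Sym2.out_fst_mem e) _ (Sym2.out_snd_mem e)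
  have hfar (hr : F.Reachable e.out.1 e.out.2) : 2 * ℓ - 2 < F.dist e.out.1 e.out.2 := by
    have := two_mul_le_dist_of_even hFG hodd hadj hnF hr ((c.even_dist_iff_eq hr).mpr hc)
    omega
  rw [recolor_of_near hℓ (hM.mono hDM) he (Reachable.refl _) (by simp), dist_self,
    recolor_of_mem_of_far hℓ hM hDM he.1 (Sym2.out_snd_mem e) fun _ => hfar, ← hc]
  exact adj_ballColor_zero hℓ _

lemma adj_recolor_of_mem (hℓ : 1 ≤ ℓ) (hM : PairwiseFar F (4 * ℓ - 2) M) (hFG : F ≤ G)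
    (hodd : ∀ (u : V) (w : G.Walk u u), w.IsCycle → Odd w.length → ¬ w.length ≤ 2 * ℓ - 1)
    (huvM : s(u, v) ∈ M) (hadj : G.Adj u v) (hnF : ¬ F.Adj u v) :
    (cycleGraph (2 * ℓ + 1)).Adj (recolor c (monochromaticEdges c M) ℓ u)
      (recolor c (monochromaticEdges c M) ℓ v) := by
  have hDM : monochromaticEdges c M ⊆ M := fun _ h => h.1
  by_cases hcuv : c u = c v
  · have he : s(u, v) ∈ monochromaticEdges c M := ⟨huvM, by simp [hcuv]⟩
    generalize hp : s(u, v) = e at he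
    rcases Sym2.eq_iff.mp (e.out_eq.trans hp.symm) with ⟨h₁, h₂⟩ | ⟨h₁, h₂⟩
    · rw [← h₁, ← h₂] at hadj hnF ⊢
      exact adj_recolor_out_of_monochromatic hℓ hM hFG hodd he hadj hnF
    · rw [← h₁, ← h₂] at hadj hnF ⊢
      exact (adj_recolor_out_of_monochromatic hℓ hM hFG hodd he hadj.symm
        fun h => hnF h.symm).symm
  · have hnotD : s(u, v) ∉ monochromaticEdges c M := fun h =>
      hcuv (h.2 u (Sym2.mem_mk_left _ _) v (Sym2.mem_mk_right _ _))
    rw [recolor_of_mem_of_far hℓ hM hDM huvM (Sym2.mem_mk_left _ _) (absurd · hnotD),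
      recolor_of_mem_of_far hℓ hM hDM huvM (Sym2.mem_mk_right _ _) (absurd · hnotD),
      Bool.eq_not.mpr (Ne.symm hcuv)]
    exact adj_toNat_not hℓ _

end Recolor

end SimpleGraph

open SimpleGraph in
/-- Let `ℓ ≥ 1` and let `G` be a graph whose edge set is partitioned as `F ∪ M` where `F` is a
forest and the distance in `F` between any two distinct edges of `M` is at least `4ℓ-2`.
If `G` contains no odd cycle of length at most `2ℓ-1`, then `G` admits a homomorphism
to the cycle `C_{2ℓ+1}`. -/
theorem statement6 {V : Type*} (ℓ : ℕ) (hℓ : 1 ≤ ℓ) (G F : SimpleGraph V) (M : Set (Sym2 V))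
    (hF : F.IsAcyclic)
    (hpart : F.edgeSet ∪ M = G.edgeSet)
    (hdisj : Disjoint F.edgeSet M)
    (hdist : ∀ e₁ ∈ M, ∀ e₂ ∈ M, e₁ ≠ e₂ →
      ∀ x ∈ e₁, ∀ y ∈ e₂, ∀ w : F.Walk x y, 4 * ℓ - 2 ≤ w.length)
    (hodd : ∀ (u : V) (w : G.Walk u u), w.IsCycle → Odd w.length → ¬ w.length ≤ 2 * ℓ - 1) :
    Nonempty (G →g cycleGraph (2 * ℓ + 1)) := by
  have hFG : F ≤ G := fun u v h => (hpart ▸ Or.inl h : s(u, v) ∈ G.edgeSet)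
  let c : F.Coloring Bool := recolorOfEquiv F finTwoEquiv hF.coloringTwo
  refine ⟨⟨recolor c (monochromaticEdges c M) ℓ, fun {u v} huv => ?_⟩⟩
  rcases (hpart.symm ▸ huv : s(u, v) ∈ F.edgeSet ∪ M) with huvF | huvM
  · exact adj_recolor_of_adj hF hℓ (PairwiseFar.mono hdist fun _ h => h.1) huvF
  · exact adj_recolor_of_mem hℓ hdist hFG hodd huvM huv fun h =>
      Set.disjoint_left.mp hdisj h huvM
end

section
/- If a finite graph G admits a homomorphism to the cycle C_{2ℓ+1}, then G has an induced bipartite subgraph on at least (2ℓ/(2ℓ+1))·|V(G)| vertices. -/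
/-!
Let `f : G →g C_{2ℓ+1}` and delete from `G` the least populated fibre `f⁻¹(i)`. By pigeonhole it
has at most `|V(G)| / (2ℓ+1)` vertices, and what remains maps into `C_{2ℓ+1}` minus the vertex
`i`, which is a path and hence bipartite.
-/

open SimpleGraph Finset

lemma Fin.val_mod_two_ne_of_val_sub_eq_one {n : ℕ} [NeZero n] {a b : Fin n}
    (hab : (a - b).val = 1) (ha : a ≠ 0) : a.val % 2 ≠ b.val % 2 := by
  have hlt : b.val < n := b.isLt
  have ha0 : a.val ≠ 0 := Fin.val_ne_zero_iff.2 ha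
  have ha' : a.val = (b.val + 1) % n := by
    rw [← hab, ← Fin.val_add, add_sub_cancel b a]
  rcases Nat.lt_or_ge (b.val + 1) n with h | h
  · rw [Nat.mod_eq_of_lt h] at ha'
    omega
  · rw [show b.val + 1 = n by omega, Nat.mod_self] at ha'
    exact absurd ha' ha0

/-- Removing `i` opens the cycle into a path, along which the parity of the distance from `i`
alternates. -/
theorem cycleGraph_induce_compl_singleton_colorable_two (n : ℕ) (i : Fin n) :
    ((cycleGraph n).induce ({i}ᶜ : Set (Fin n))).Colorable 2 := by
  refine (colorable_iff_exists_bdd_nat_coloring 2).2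
    ⟨Coloring.mk (fun j => (j.1 - i).val % 2) ?_, fun _ => Nat.mod_lt _ two_pos⟩
  have : NeZero n := ⟨fun hn => (hn ▸ i).elim0⟩
  rintro ⟨j, hj⟩ ⟨k, hk⟩ hjk
  have hj' : j - i ≠ 0 := sub_ne_zero.2 hj
  have hk' : k - i ≠ 0 := sub_ne_zero.2 hk
  rcases cycleGraph_adj'.1 (induce_adj.1 hjk) with h | h
  · exact Fin.val_mod_two_ne_of_val_sub_eq_one (by rwa [sub_sub_sub_cancel_right]) hj'
  · exact (Fin.val_mod_two_ne_of_val_sub_eq_one (by rwa [sub_sub_sub_cancel_right]) hk').symm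

theorem SimpleGraph.Colorable.induce_preimage {V W : Type*} {G : SimpleGraph V}
    {H : SimpleGraph W} (f : G →g H) {s : Set W} {k : ℕ} (h : (H.induce s).Colorable k) :
    (G.induce (f ⁻¹' s)).Colorable k :=
  h.of_hom ⟨fun v => ⟨f v, v.2⟩, fun hvw => f.map_adj hvw⟩

theorem Fintype.exists_le_card_fiber_compl {α β : Type*} [Fintype α] [Fintype β] [Nonempty β]
    [DecidableEq β] (f : α → β) :
    ∃ y, ((card β - 1) / card β : ℝ) * card α ≤ #{x | f x ≠ y} := by
  have hβ : (0 : ℝ) < card β := by exact_mod_cast card_pos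
  obtain ⟨y, hy⟩ := exists_card_fiber_le_of_card_le_nsmul (f := f) (b := (card α / card β : ℝ))
    (by rw [nsmul_eq_mul, mul_div_cancel₀ _ hβ.ne'])
  refine ⟨y, ?_⟩
  have hsplit := card_filter_add_card_filter_not (s := univ) (fun x => f x = y)
  rw [card_univ] at hsplit
  have hsplit' : (#{x | f x = y} : ℝ) + #{x | f x ≠ y} = card α := by exact_mod_cast hsplit
  calc ((card β - 1) / card β : ℝ) * card α = card α - card α / card β := by
        field_simp
    _ ≤ #{x | f x ≠ y} := by linarith

/-- If a finite graph `G` admits a homomorphism to the cycle `C_{2ℓ+1}`, then `G` has an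
induced bipartite subgraph on at least `(2ℓ/(2ℓ+1)) · |V(G)|` vertices. -/
theorem statement7 {V : Type*} [Fintype V] (ℓ : ℕ) (G : SimpleGraph V)
    (h : Nonempty (G →g cycleGraph (2 * ℓ + 1))) :
    ∃ S : Finset V,
      (G.induce (S : Set V)).Colorable 2 ∧
      (2 * ℓ : ℝ) / (2 * ℓ + 1) * Fintype.card V ≤ S.card := by
  obtain ⟨f⟩ := h
  obtain ⟨i, hi⟩ := Fintype.exists_le_card_fiber_compl f
  refine ⟨({v | f v ≠ i} : Finset V), ?_, by simpa using hi⟩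
  rw [coe_filter_univ]
  exact (cycleGraph_induce_compl_singleton_colorable_two _ i).induce_preimage f
end

section
/- For every real c > 2.774 and every real β with 0.999971 < β < 1, one has 2^β · e^{−cβ²/4} / (β^β (1−β)^{1−β}) < 1. -/
/-- For every real `c > 2.774` and every real `β` with `0.999971 < β < 1`,
`2^β · e^{-cβ²/4} / (β^β (1-β)^{1-β}) < 1`. -/
theorem statement11 (c β : ℝ) (hc : 2.774 < c) (hβ0 : 0.999971 < β) (hβ1 : β < 1) :
    (2 : ℝ) ^ β * Real.exp (-c * β ^ 2 / 4) / (β ^ β * (1 - β) ^ (1 - β)) < 1 := by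
  have hβp : (0:ℝ) < β := by linarith
  have ht0 : (0:ℝ) < 1 - β := by linarith
  have ht1 : (1:ℝ) - β < 0.000029 := by linarith
  have hden : (0:ℝ) < β ^ β * (1 - β) ^ (1 - β) := by positivity
  rw [div_lt_one hden]
  rw [Real.rpow_def_of_pos two_pos β, Real.rpow_def_of_pos hβp β,
    Real.rpow_def_of_pos ht0 (1 - β), ← Real.exp_add, ← Real.exp_add, Real.exp_lt_exp]
  -- goal: log 2 * β + -c * β ^ 2 / 4 < log β * β + log (1-β) * (1-β)
  -- bound A : log β * β ≥ -(1 - β)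
  have hA : -(1 - β) ≤ Real.log β * β := by
    have h1 : Real.log β⁻¹ ≤ β⁻¹ - 1 := Real.log_le_sub_one_of_pos (by positivity)
    rw [Real.log_inv] at h1
    have h2 := mul_le_mul_of_nonneg_right h1 hβp.le
    have h3 : β⁻¹ * β = 1 := inv_mul_cancel₀ hβp.ne'
    nlinarith [h2, h3]
  -- bound B : log (1-β) * (1-β) ≥ (1-β) - 1/32768 - 15 * log 2 * (1-β)
  have hB : (1 - β) - 1/32768 - 15 * Real.log 2 * (1 - β) ≤ Real.log (1 - β) * (1 - β) := by
    have hmul : (0:ℝ) < 32768 * (1 - β) := by linarith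
    have h1 : Real.log (32768 * (1 - β))⁻¹ ≤ (32768 * (1 - β))⁻¹ - 1 :=
      Real.log_le_sub_one_of_pos (by positivity)
    rw [Real.log_inv, Real.log_mul (by norm_num) ht0.ne'] at h1
    have h32 : Real.log 32768 = 15 * Real.log 2 := by
      rw [show (32768:ℝ) = 2 ^ 15 by norm_num, Real.log_pow]
      push_cast; ring
    rw [h32] at h1
    have h2 := mul_le_mul_of_nonneg_right h1 ht0.le
    have h3 : ((32768 * (1 - β))⁻¹ - 1) * (1 - β) = 1/32768 - (1 - β) := by
      field_simp
    nlinarith [h2, h3]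
  -- bound C : c * β^2 / 4 > 0.6935 * (1 - 2*(1-β))
  have hC : 0.6935 * (1 - 2 * (1 - β)) < c * β ^ 2 / 4 := by
    nlinarith [sq_nonneg (β - 1), sq_nonneg β]
  -- numeric bounds on log 2 times positive quantities
  have hu : Real.log 2 * β < 0.6931471808 * β :=
    mul_lt_mul_of_pos_right Real.log_two_lt_d9 hβp
  have hv : Real.log 2 * (1 - β) < 0.6931471808 * (1 - β) :=
    mul_lt_mul_of_pos_right Real.log_two_lt_d9 ht0
  nlinarith [hA, hB, hC, hu, hv, ht1, ht0]
end

section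
/- With high probability as n → ∞, the random graph G_{n,4/n} contains no induced bipartite subgraph on 0.94·n or more vertices. -/
open Filter SimpleGraph

open Finset

open scoped Classical

variable {α : Type*} [DecidableEq α]

/-- binomial identity -/
lemma binom_sum (p : ℝ) (V : Finset α) :
    ∑ t ∈ V.powerset, p ^ t.card * (1 - p) ^ (V.card - t.card) = 1 := by
  have h := Finset.prod_add (fun _ : α => p) (fun _ => 1 - p) V
  simp only [Finset.prod_const] at h
  have : ∀ t ∈ V.powerset, p ^ t.card * (1-p) ^ (V \ t).card
      = p ^ t.card * (1 - p) ^ (V.card - t.card) := by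
    intro t ht
    rw [Finset.card_sdiff_of_subset (Finset.mem_powerset.mp ht)]
  rw [Finset.sum_congr rfl this] at h
  have h2 : p + (1 - p) = 1 := by ring
  rw [h2, one_pow] at h
  exact h.symm

/-- the set of potential edges -/
noncomputable def pairsU (n : ℕ) : Finset (Sym2 (Fin n)) :=
  Finset.univ.filter (fun e => ¬ e.IsDiag)

lemma card_pairsU (n : ℕ) : (pairsU n).card = n.choose 2 := by
  have := @Sym2.card_subtype_not_diag (Fin n) _ _
  rw [Fintype.card_fin] at this
  rw [← this, Fintype.card_subtype]
  simp [pairsU]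

lemma erProb_eq_sum (n : ℕ) (p : ℝ) (P : SimpleGraph (Fin n) → Prop) :
    erProb n p P = ∑ t ∈ (pairsU n).powerset,
      if P (fromEdgeSet ↑t) then p ^ t.card * (1 - p) ^ (n.choose 2 - t.card) else 0 := by
  rw [erProb]
  refine Finset.sum_nbij' (fun G => G.edgeFinset) (fun t => fromEdgeSet ↑t) ?_ ?_ ?_ ?_ ?_
  · intro G _
    simp only [Finset.mem_powerset]
    intro e he
    rw [SimpleGraph.mem_edgeFinset] at he
    simp only [pairsU, Finset.mem_filter, Finset.mem_univ, true_and]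
    exact G.not_isDiag_of_mem_edgeSet he
  · intro t _; exact Finset.mem_univ _
  · intro G _
    simp [SimpleGraph.coe_edgeFinset, SimpleGraph.fromEdgeSet_edgeSet]
  · intro t ht
    have h : (fromEdgeSet (↑t : Set (Sym2 (Fin n)))).edgeSet = ↑t := by
      rw [SimpleGraph.edgeSet_fromEdgeSet]
      ext e
      simp only [Set.mem_diff, Set.mem_setOf_eq, Finset.mem_coe, and_iff_left_iff_imp]
      intro het hed
      have := Finset.mem_powerset.mp ht het
      simp [pairsU] at this
      exact this hed
    apply Finset.coe_injective
    rw [SimpleGraph.coe_edgeFinset, h]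
  · intro G _
    have hcard : G.edgeSet.ncard = G.edgeFinset.card := by
      rw [← SimpleGraph.coe_edgeFinset, Set.ncard_coe_finset]
    have h : fromEdgeSet (↑G.edgeFinset : Set (Sym2 (Fin n))) = G := by
      rw [SimpleGraph.coe_edgeFinset, SimpleGraph.fromEdgeSet_edgeSet]
    rw [hcard, h]

section prob
variable {n : ℕ} {p : ℝ}

/-- probability on the powerset side -/
noncomputable def prSet (n : ℕ) (p : ℝ) (Q : Finset (Sym2 (Fin n)) → Prop) : ℝ :=
  ∑ t ∈ (pairsU n).powerset,
    if Q t then p ^ t.card * (1 - p) ^ (n.choose 2 - t.card) else 0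

lemma erProb_eq_prSet (P : SimpleGraph (Fin n) → Prop) :
    erProb n p P = prSet n p (fun t => P (fromEdgeSet ↑t)) := erProb_eq_sum n p P

lemma prSet_total : prSet n p (fun _ => True) = 1 := by
  rw [prSet]
  simp only [if_true]
  have := binom_sum p (pairsU n)
  rw [card_pairsU] at this
  exact this

lemma prSet_add_compl (Q : Finset (Sym2 (Fin n)) → Prop) :
    prSet n p Q + prSet n p (fun t => ¬ Q t) = 1 := by
  rw [← prSet_total (n := n) (p := p), prSet, prSet, prSet, ← Finset.sum_add_distrib]
  apply Finset.sum_congr rfl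
  intro t _
  by_cases h : Q t <;> simp [h]

lemma prSet_nonneg (hp0 : 0 ≤ p) (hp1 : p ≤ 1) (Q : Finset (Sym2 (Fin n)) → Prop) :
    0 ≤ prSet n p Q := by
  apply Finset.sum_nonneg
  intro t _
  split
  · exact mul_nonneg (pow_nonneg hp0 _) (pow_nonneg (by linarith) _)
  · exact le_refl 0

/-- union bound -/
lemma prSet_le_sum {ι : Type*} (hp0 : 0 ≤ p) (hp1 : p ≤ 1)
    (Q : Finset (Sym2 (Fin n)) → Prop) (F : Finset ι) (R : ι → Finset (Sym2 (Fin n)) → Prop)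
    (h : ∀ t ∈ (pairsU n).powerset, Q t → ∃ x ∈ F, R x t) :
    prSet n p Q ≤ ∑ x ∈ F, prSet n p (R x) := by
  have key : ∀ t ∈ (pairsU n).powerset,
      (if Q t then p ^ t.card * (1 - p) ^ (n.choose 2 - t.card) else 0)
      ≤ ∑ x ∈ F, (if R x t then p ^ t.card * (1 - p) ^ (n.choose 2 - t.card) else 0) := by
    intro t ht
    have hw : 0 ≤ p ^ t.card * (1 - p) ^ (n.choose 2 - t.card) :=
      mul_nonneg (pow_nonneg hp0 _) (pow_nonneg (by linarith) _)
    by_cases hq : Q t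
    · obtain ⟨x, hx, hr⟩ := h t ht hq
      rw [if_pos hq]
      calc p ^ t.card * (1 - p) ^ (n.choose 2 - t.card)
          = (if R x t then p ^ t.card * (1 - p) ^ (n.choose 2 - t.card) else 0) := by
            rw [if_pos hr]
        _ ≤ _ := Finset.single_le_sum (f := fun x =>
              (if R x t then p ^ t.card * (1 - p) ^ (n.choose 2 - t.card) else 0))
              (fun y _ => by positivity) hx
    · rw [if_neg hq]
      exact Finset.sum_nonneg fun y _ => by positivity
  calc prSet n p Q ≤ ∑ t ∈ (pairsU n).powerset,
        ∑ x ∈ F, (if R x t then p ^ t.card * (1 - p) ^ (n.choose 2 - t.card) else 0) :=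
        Finset.sum_le_sum key
    _ = _ := by rw [Finset.sum_comm]; rfl


lemma prSet_subset_eq (Q : Finset (Sym2 (Fin n)) → Prop) (V : Finset (Sym2 (Fin n)))
    (hV : V ⊆ pairsU n) (hiff : ∀ t ⊆ pairsU n, (Q t ↔ t ⊆ V)) :
    prSet n p Q = (1 - p) ^ (n.choose 2 - V.card) := by
  rw [prSet]
  have hsub : V.powerset ⊆ (pairsU n).powerset := Finset.powerset_mono.mpr hV
  have hzero : ∀ t ∈ (pairsU n).powerset, t ∉ V.powerset →
      (if Q t then p ^ t.card * (1 - p) ^ (n.choose 2 - t.card) else 0) = 0 := by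
    intro t ht hnt
    rw [if_neg]
    intro hq
    exact hnt (Finset.mem_powerset.mpr
      ((hiff t (Finset.mem_powerset.mp ht)).mp hq))
  rw [← Finset.sum_subset hsub hzero]
  have hpos : ∀ t ∈ V.powerset,
      (if Q t then p ^ t.card * (1 - p) ^ (n.choose 2 - t.card) else 0)
      = p ^ t.card * (1 - p) ^ (n.choose 2 - t.card) := by
    intro t ht
    rw [if_pos]
    exact (hiff t ((Finset.mem_powerset.mp ht).trans hV)).mpr (Finset.mem_powerset.mp ht)
  rw [Finset.sum_congr rfl hpos]
  have hVc : V.card ≤ n.choose 2 := by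
    rw [← card_pairsU]; exact Finset.card_le_card hV
  have key : ∀ t ∈ V.powerset,
      p ^ t.card * (1 - p) ^ (n.choose 2 - t.card)
      = (1 - p) ^ (n.choose 2 - V.card) * (p ^ t.card * (1 - p) ^ (V.card - t.card)) := by
    intro t ht
    have ht' : t.card ≤ V.card := Finset.card_le_card (Finset.mem_powerset.mp ht)
    have : n.choose 2 - t.card = (n.choose 2 - V.card) + (V.card - t.card) := by omega
    rw [this, pow_add]
    ring
  rw [Finset.sum_congr rfl key, ← Finset.mul_sum, binom_sum]
  ring

lemma prSet_disjoint (E : Finset (Sym2 (Fin n))) (hE : E ⊆ pairsU n) :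
    prSet n p (fun t => Disjoint t E) = (1 - p) ^ E.card := by
  have h := prSet_subset_eq (p := p) (fun t => Disjoint t E) (pairsU n \ E)
    Finset.sdiff_subset (fun t ht => by rw [Finset.subset_sdiff]; tauto)
  rw [h, Finset.card_sdiff_of_subset hE, card_pairsU]
  congr 1
  have hEc : E.card ≤ n.choose 2 := by rw [← card_pairsU]; exact Finset.card_le_card hE
  omega

end prob

section pairs
variable {n : ℕ}

/-- potential edges inside a vertex set -/
noncomputable def badPairs (A : Finset (Fin n)) : Finset (Sym2 (Fin n)) :=
  A.sym2.filter (fun e => ¬ e.IsDiag)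

lemma badPairs_subset (A : Finset (Fin n)) : badPairs A ⊆ pairsU n := by
  intro e he
  simp only [badPairs, Finset.mem_filter] at he
  simp [pairsU, he.2]

lemma mem_badPairs {A : Finset (Fin n)} {u v : Fin n} :
    s(u, v) ∈ badPairs A ↔ u ∈ A ∧ v ∈ A ∧ u ≠ v := by
  simp only [badPairs, Finset.mem_filter, Finset.mk_mem_sym2_iff, Sym2.mk_isDiag_iff]
  tauto

lemma card_badPairs (A : Finset (Fin n)) : (badPairs A).card = A.card.choose 2 := by
  have hsplit := Finset.card_filter_add_card_filter_not
    (s := A.sym2) (p := fun e => e.IsDiag)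
  have hdiag : A.sym2.filter (fun e => e.IsDiag) = A.image Sym2.diag := by
    ext e
    induction e using Sym2.ind with
    | _ u v =>
      simp only [Finset.mem_filter, Finset.mk_mem_sym2_iff, Sym2.mk_isDiag_iff,
        Finset.mem_image]
      constructor
      · rintro ⟨⟨hu, hv⟩, rfl⟩
        exact ⟨u, hu, rfl⟩
      · rintro ⟨a, ha, he⟩
        rw [Sym2.diag] at he
        rcases Sym2.eq_iff.mp he with ⟨h1, h2⟩ | ⟨h1, h2⟩ <;> subst h1 <;> subst h2 <;>
          exact ⟨⟨ha, ha⟩, rfl⟩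
  have hdcard : (A.sym2.filter (fun e => e.IsDiag)).card = A.card := by
    rw [hdiag, Finset.card_image_of_injective _ Sym2.diag_injective]
  have htot := Finset.card_sym2 A
  have : (badPairs A).card = (A.card + 1).choose 2 - A.card := by
    rw [badPairs, ← htot, ← hsplit, hdcard]
    omega
  rw [this, Nat.choose_succ_succ]
  simp [Nat.choose_one_right]

end pairs

lemma badPairs_disjoint {n : ℕ} {A B : Finset (Fin n)} (h : Disjoint A B) :
    Disjoint (badPairs A) (badPairs B) := by
  rw [Finset.disjoint_left]
  intro e heA heB
  induction e using Sym2.ind with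
  | _ u v =>
    rw [mem_badPairs] at heA heB
    exact Finset.disjoint_left.mp h heA.1 heB.1

lemma card_badPairs_union {n : ℕ} {A B : Finset (Fin n)} (h : Disjoint A B) :
    (badPairs A ∪ badPairs B).card = A.card.choose 2 + B.card.choose 2 := by
  rw [Finset.card_union_of_disjoint (badPairs_disjoint h), card_badPairs, card_badPairs]

lemma reduction (n : ℕ) (t : Finset (Sym2 (Fin n)))
    (hbad : ¬ ∀ S : Finset (Fin n), (0.94 * n : ℝ) ≤ S.card →
      ¬ ((fromEdgeSet (↑t : Set (Sym2 (Fin n)))).induce (S : Set (Fin n))).Colorable 2) :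
    ∃ x ∈ (Finset.univ.powersetCard ⌈(0.94:ℝ) * n⌉₊).sigma
        (fun S : Finset (Fin n) => S.powerset),
      Disjoint t (badPairs x.2 ∪ badPairs (x.1 \ x.2)) := by
  push_neg at hbad
  obtain ⟨S, h94, hcol⟩ := hbad
  set G := fromEdgeSet (↑t : Set (Sym2 (Fin n))) with hG
  obtain ⟨C⟩ := hcol
  have hs0 : ⌈(0.94:ℝ) * n⌉₊ ≤ S.card := Nat.ceil_le.mpr h94
  obtain ⟨S', hS'sub, hS'card⟩ := Finset.exists_subset_card_eq hs0
  classical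
  set A := S'.filter (fun v => ∃ h : v ∈ (S : Set (Fin n)), C ⟨v, h⟩ = 0) with hA
  refine ⟨⟨S', A⟩, ?_, ?_⟩
  · rw [Finset.mem_sigma]
    constructor
    · exact Finset.mem_powersetCard_univ.mpr hS'card
    · exact Finset.mem_powerset.mpr (Finset.filter_subset _ _)
  · rw [Finset.disjoint_left]
    intro e het heb
    induction e using Sym2.ind with
    | _ u v =>
      have hadj : G.Adj u v := by
        rw [hG, SimpleGraph.fromEdgeSet_adj]
        refine ⟨het, ?_⟩
        rcases Finset.mem_union.mp heb with h | h <;>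
          exact (mem_badPairs.mp h).2.2
      rcases Finset.mem_union.mp heb with h | h
      · obtain ⟨huA, hvA, hne⟩ := mem_badPairs.mp h
        have huS : u ∈ (S : Set (Fin n)) := hS'sub (Finset.mem_of_mem_filter _ huA)
        have hvS : v ∈ (S : Set (Fin n)) := hS'sub (Finset.mem_of_mem_filter _ hvA)
        have hadj' : (G.induce (S : Set (Fin n))).Adj ⟨u, huS⟩ ⟨v, hvS⟩ := by
          simp only [SimpleGraph.comap_adj, Function.Embedding.coe_subtype]
          exact hadj
        have := C.valid hadj'
        obtain ⟨h1, hc1⟩ := (Finset.mem_filter.mp huA).2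
        obtain ⟨h2, hc2⟩ := (Finset.mem_filter.mp hvA).2
        apply this
        rw [show (⟨u, huS⟩ : (S : Set (Fin n))) = ⟨u, h1⟩ from rfl,
          show (⟨v, hvS⟩ : (S : Set (Fin n))) = ⟨v, h2⟩ from rfl, hc1, hc2]
      · obtain ⟨huA, hvA, hne⟩ := mem_badPairs.mp h
        have huS' : u ∈ S' := (Finset.mem_sdiff.mp huA).1
        have hvS' : v ∈ S' := (Finset.mem_sdiff.mp hvA).1
        have huS : u ∈ (S : Set (Fin n)) := hS'sub huS'
        have hvS : v ∈ (S : Set (Fin n)) := hS'sub hvS'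
        have hadj' : (G.induce (S : Set (Fin n))).Adj ⟨u, huS⟩ ⟨v, hvS⟩ := by
          simp only [SimpleGraph.comap_adj, Function.Embedding.coe_subtype]
          exact hadj
        have hval := C.valid hadj'
        have hone : ∀ c : Fin 2, c ≠ 0 → c = 1 := by decide
        have hu1 : C ⟨u, huS⟩ = 1 := by
          apply hone
          intro h0
          exact (Finset.mem_sdiff.mp huA).2 (Finset.mem_filter.mpr ⟨huS', huS, h0⟩)
        have hv1 : C ⟨v, hvS⟩ = 1 := by
          apply hone
          intro h0
          exact (Finset.mem_sdiff.mp hvA).2 (Finset.mem_filter.mpr ⟨hvS', hvS, h0⟩)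
        exact hval (hu1.trans hv1.symm)

section numeric

lemma pow_self_le_factorial_mul_exp (k : ℕ) :
    (k : ℝ) ^ k ≤ k.factorial * Real.exp 1 ^ k := by
  induction k with
  | zero => simp
  | succ m ih =>
    have hm : (0:ℝ) ≤ m := Nat.cast_nonneg m
    have key : ((m+1 : ℕ) : ℝ) ^ m ≤ (m : ℝ) ^ m * Real.exp 1 := by
      rcases Nat.eq_zero_or_pos m with rfl | hmpos
      · simpa using Real.one_le_exp (by norm_num : (0:ℝ) ≤ 1)
      · have hmR : (0:ℝ) < m := by exact_mod_cast hmpos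
        have h1 : ((m+1:ℕ):ℝ) ^ m = (m:ℝ)^m * (1 + 1/(m:ℝ))^m := by
          rw [← mul_pow]
          congr 1
          push_cast
          field_simp
        rw [h1]
        apply mul_le_mul_of_nonneg_left _ (pow_nonneg hm m) |>.trans_eq rfl
        have h2 : (1 + 1/(m:ℝ)) ≤ Real.exp (1/(m:ℝ)) := by
          have := Real.add_one_le_exp (1/(m:ℝ))
          linarith
        calc (1 + 1/(m:ℝ))^m ≤ Real.exp (1/(m:ℝ)) ^ m := by
              apply pow_le_pow_left₀ (by positivity) h2
          _ = Real.exp ((m:ℝ) * (1/(m:ℝ))) := by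
              rw [← Real.exp_nat_mul]
          _ = Real.exp 1 := by
              congr 1
              field_simp
    calc ((m+1:ℕ) : ℝ) ^ (m+1) = ((m+1:ℕ):ℝ) * ((m+1:ℕ):ℝ) ^ m := by ring
      _ ≤ ((m+1:ℕ):ℝ) * ((m:ℝ)^m * Real.exp 1) := by
          apply mul_le_mul_of_nonneg_left key (by positivity)
      _ ≤ ((m+1:ℕ):ℝ) * ((m.factorial * Real.exp 1 ^ m) * Real.exp 1) := by
          apply mul_le_mul_of_nonneg_left _ (by positivity)
          apply mul_le_mul_of_nonneg_right ih (Real.exp_pos 1).le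
      _ = (m+1).factorial * Real.exp 1 ^ (m+1) := by
          rw [Nat.factorial_succ]
          push_cast
          ring

lemma choose_le_exp_bound {n k : ℕ} (hk : 0 < k) (hnk : (n:ℝ) ≤ 17 * k) :
    (n.choose k : ℝ) ≤ (17 * Real.exp 1) ^ k := by
  have h1 : (n.choose k : ℝ) * k.factorial ≤ (n:ℝ)^k := by
    have := Nat.descFactorial_le_pow n k
    rw [Nat.descFactorial_eq_factorial_mul_choose] at this
    exact_mod_cast Nat.mul_comm _ _ ▸ this
  have h2 := pow_self_le_factorial_mul_exp k
  have hkR : (0:ℝ) < k := by exact_mod_cast hk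
  have hfac : (0:ℝ) < k.factorial := by exact_mod_cast k.factorial_pos
  have h3 : (n:ℝ)^k ≤ (17*k:ℝ)^k := pow_le_pow_left₀ (Nat.cast_nonneg n) hnk k
  -- choose * k^k ≤ choose * k! * e^k ≤ n^k e^k ≤ (17k)^k e^k = (17e)^k * k^k
  have hc : (0:ℝ) ≤ n.choose k := Nat.cast_nonneg _
  have key : (n.choose k : ℝ) * (k:ℝ)^k ≤ (17*Real.exp 1)^k * (k:ℝ)^k := by
    calc (n.choose k : ℝ) * (k:ℝ)^k ≤ (n.choose k : ℝ) * (k.factorial * Real.exp 1 ^ k) :=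
          mul_le_mul_of_nonneg_left h2 hc
      _ = ((n.choose k : ℝ) * k.factorial) * Real.exp 1 ^ k := by ring
      _ ≤ (n:ℝ)^k * Real.exp 1 ^ k := by
          apply mul_le_mul_of_nonneg_right h1 (by positivity)
      _ ≤ (17*k:ℝ)^k * Real.exp 1 ^ k := by
          apply mul_le_mul_of_nonneg_right h3 (by positivity)
      _ = (17*Real.exp 1)^k * (k:ℝ)^k := by
          rw [← mul_pow, ← mul_pow]
          ring_nf
  have hkk : (0:ℝ) < (k:ℝ)^k := pow_pos hkR k
  exact le_of_mul_le_mul_right key hkk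

end numeric

lemma main_bound (n : ℕ) (hn : 4 ≤ n) :
    1 - erProb n (4 / n) (fun G =>
        ∀ S : Finset (Fin n), (0.94 * n : ℝ) ≤ S.card →
          ¬ (G.induce (S : Set (Fin n))).Colorable 2)
      ≤ (n.choose ⌈(0.94:ℝ) * n⌉₊ : ℝ) * 2 ^ ⌈(0.94:ℝ) * n⌉₊
          * Real.exp (2 - 0.8836 * n) := by
  have hN : (0:ℝ) < n := by
    have : 0 < n := by omega
    exact_mod_cast this
  set p : ℝ := 4 / n with hp
  have hp0 : 0 ≤ p := by positivity
  have hp1 : p ≤ 1 := by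
    rw [hp, div_le_one hN]
    exact_mod_cast hn
  set s0 : ℕ := ⌈(0.94:ℝ) * n⌉₊ with hs0
  set P : SimpleGraph (Fin n) → Prop := (fun G =>
        ∀ S : Finset (Fin n), (0.94 * n : ℝ) ≤ S.card →
          ¬ (G.induce (S : Set (Fin n))).Colorable 2) with hP
  set Q : Finset (Sym2 (Fin n)) → Prop := fun t => P (fromEdgeSet ↑t) with hQ
  have h1 : erProb n p P = prSet n p Q := erProb_eq_prSet P
  have h2 := prSet_add_compl (n := n) (p := p) Q
  have hcompl : 1 - erProb n p P = prSet n p (fun t => ¬ Q t) := by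
    rw [h1]; linarith
  set F := (Finset.univ.powersetCard s0).sigma
      (fun S : Finset (Fin n) => S.powerset) with hF
  set R : (Σ _ : Finset (Fin n), Finset (Fin n)) → Finset (Sym2 (Fin n)) → Prop :=
    fun x t => Disjoint t (badPairs x.2 ∪ badPairs (x.1 \ x.2)) with hR
  have hub : prSet n p (fun t => ¬ Q t) ≤ ∑ x ∈ F, prSet n p (R x) := by
    apply prSet_le_sum hp0 hp1
    intro t ht hq
    exact reduction n t hq
  -- facts about s0
  have hs0n : s0 ≤ n := by
    rw [hs0]
    apply Nat.ceil_le.mpr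
    nlinarith
  have hs0ge : (0.94:ℝ) * n ≤ s0 := Nat.le_ceil _
  have hs0len : (s0 : ℝ) ≤ n := by exact_mod_cast hs0n
  -- per-term bound
  have hterm : ∀ x ∈ F, prSet n p (R x) ≤ Real.exp (2 - 0.8836 * n) := by
    intro x hxF
    rw [hF, Finset.mem_sigma] at hxF
    obtain ⟨hx1, hx2⟩ := hxF
    have hx1c : x.1.card = s0 := Finset.mem_powersetCard_univ.mp hx1
    have hx2s : x.2 ⊆ x.1 := Finset.mem_powerset.mp hx2
    set A := x.2 with hA
    set B := x.1 \ x.2 with hB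
    have hAB : Disjoint A B := Finset.disjoint_sdiff
    have hEsub : badPairs A ∪ badPairs B ⊆ pairsU n :=
      Finset.union_subset (badPairs_subset A) (badPairs_subset B)
    have heq : prSet n p (R x) = (1 - p) ^ (badPairs A ∪ badPairs B).card :=
      prSet_disjoint _ hEsub
    rw [heq, card_badPairs_union hAB]
    set a := A.card with ha
    set b := B.card with hb
    have hab : a + b = s0 := by
      have hsd : b = s0 - a := by rw [hb, hB, Finset.card_sdiff_of_subset hx2s, hx1c, ha, hA]
      have hle : a ≤ s0 := by rw [ha, hA, ← hx1c]; exact Finset.card_le_card hx2s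
      omega
    set k := a.choose 2 + b.choose 2 with hk
    have hkR : ((s0:ℝ)^2/4 - (s0:ℝ)/2) ≤ (k : ℝ) := by
      have hcast : (k : ℝ) = (a:ℝ)*((a:ℝ)-1)/2 + (b:ℝ)*((b:ℝ)-1)/2 := by
        rw [hk]
        push_cast [Nat.cast_choose_two]
        ring
      have habR : (a:ℝ) + (b:ℝ) = s0 := by exact_mod_cast hab
      rw [hcast]
      nlinarith [sq_nonneg ((a:ℝ) - (b:ℝ))]
    have hpk : 0.8836 * (n:ℝ) - 2 ≤ p * k := by
      rw [hp]
      rw [div_mul_eq_mul_div, le_div_iff₀ hN]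
      nlinarith [hs0ge, hs0len, hkR, sq_nonneg ((s0:ℝ) - 0.94*n)]
    calc (1 - p) ^ k ≤ Real.exp (-p) ^ k := by
          apply pow_le_pow_left₀ (by linarith)
          have := Real.add_one_le_exp (-p)
          linarith
      _ = Real.exp (-(p * k)) := by
          rw [← Real.exp_nat_mul]
          congr 1
          ring
      _ ≤ Real.exp (2 - 0.8836 * n) := by
          apply Real.exp_le_exp.mpr
          linarith
  have hFcard : (F.card : ℝ) = (n.choose s0 : ℝ) * 2 ^ s0 := by
    rw [hF, Finset.card_sigma]
    have : ∀ S ∈ (Finset.univ : Finset (Fin n)).powersetCard s0, (S.powerset.card) = 2 ^ s0 := by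
      intro S hS
      rw [Finset.card_powerset, Finset.mem_powersetCard_univ.mp hS]
    rw [Finset.sum_congr rfl this, Finset.sum_const, Finset.card_powersetCard,
      Finset.card_univ, Fintype.card_fin]
    norm_cast
  calc 1 - erProb n p P = prSet n p (fun t => ¬ Q t) := hcompl
    _ ≤ ∑ x ∈ F, prSet n p (R x) := hub
    _ ≤ ∑ _x ∈ F, Real.exp (2 - 0.8836 * n) := Finset.sum_le_sum hterm
    _ = F.card * Real.exp (2 - 0.8836 * n) := by
        rw [Finset.sum_const, nsmul_eq_mul]
    _ = (n.choose s0 : ℝ) * 2 ^ s0 * Real.exp (2 - 0.8836 * n) := by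
        rw [hFcard]

lemma erProb_le_one {n : ℕ} {p : ℝ} (hp0 : 0 ≤ p) (hp1 : p ≤ 1)
    (P : SimpleGraph (Fin n) → Prop) : erProb n p P ≤ 1 := by
  rw [erProb_eq_prSet]
  set Q : Finset (Sym2 (Fin n)) → Prop := fun t => P (fromEdgeSet ↑t) with hQ
  have h := prSet_add_compl (n := n) (p := p) Q
  have h0 := prSet_nonneg hp0 hp1 (fun t => ¬ Q t)
  linarith

lemma numeric_bound (n : ℕ) (hn : 1000 ≤ n) :
    (n.choose ⌈(0.94:ℝ) * n⌉₊ : ℝ) * 2 ^ ⌈(0.94:ℝ) * n⌉₊ * Real.exp (2 - 0.8836 * n)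
      ≤ Real.exp (2 + Real.log 2) * Real.exp (-0.0019) ^ n := by
  have hN : (1000:ℝ) ≤ n := by exact_mod_cast hn
  have hN0 : (0:ℝ) < n := by linarith
  set s0 : ℕ := ⌈(0.94:ℝ) * n⌉₊ with hs0
  have hs0ge : (0.94:ℝ) * n ≤ s0 := Nat.le_ceil _
  have hs0lt : (s0:ℝ) < 0.94 * n + 1 := by
    rw [hs0]
    exact Nat.ceil_lt_add_one (by positivity)
  have hs0n : s0 ≤ n := Nat.ceil_le.mpr (by nlinarith)
  set t : ℕ := n - s0 with htd
  have htR : (t:ℝ) = (n:ℝ) - s0 := by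
    rw [htd, Nat.cast_sub hs0n]
  have ht_ub : (t:ℝ) ≤ 0.06 * n := by rw [htR]; linarith
  have ht_lb : 0.06 * (n:ℝ) - 1 < t := by rw [htR]; linarith
  have ht_pos : 0 < t := by
    have : (0:ℝ) < t := by linarith
    exact_mod_cast this
  have hn17 : (n:ℝ) ≤ 17 * t := by linarith
  have hcs : n.choose s0 = n.choose t := by
    rw [htd, Nat.choose_symm hs0n]
  have hlog2 : Real.log 2 < 0.6931471808 := Real.log_two_lt_d9
  have hlog2pos : 0 < Real.log 2 := Real.log_pos (by norm_num)
  have hlog17 : Real.log 17 ≤ 4 * Real.log 2 + 1/16 := by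
    have h16 : Real.log 16 = 4 * Real.log 2 := by
      rw [show (16:ℝ) = 2^4 by norm_num, Real.log_pow]
      push_cast; ring
    have hdiv : Real.log (17/16) ≤ 17/16 - 1 :=
      Real.log_le_sub_one_of_pos (by norm_num)
    rw [Real.log_div (by norm_num) (by norm_num), h16] at hdiv
    linarith
  have hlog17pos : 0 ≤ Real.log 17 := Real.log_nonneg (by norm_num)
  -- choose bound
  have hchoose : (n.choose s0 : ℝ) ≤ Real.exp (0.06 * n * (Real.log 17 + 1)) := by
    rw [hcs]
    calc (n.choose t : ℝ) ≤ (17 * Real.exp 1) ^ t := choose_le_exp_bound ht_pos hn17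
      _ = Real.exp (Real.log 17 + 1) ^ t := by
          rw [Real.exp_add, Real.exp_log (by norm_num : (0:ℝ) < 17)]
      _ = Real.exp ((t:ℝ) * (Real.log 17 + 1)) := by
          rw [← Real.exp_nat_mul]
      _ ≤ Real.exp (0.06 * n * (Real.log 17 + 1)) := by
          apply Real.exp_le_exp.mpr
          apply mul_le_mul_of_nonneg_right ht_ub (by linarith)
  have h2pow : (2:ℝ) ^ s0 ≤ Real.exp ((0.94 * n + 1) * Real.log 2) := by
    calc (2:ℝ) ^ s0 = Real.exp (Real.log 2) ^ s0 := by
          rw [Real.exp_log (by norm_num : (0:ℝ) < 2)]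
      _ = Real.exp ((s0:ℝ) * Real.log 2) := by rw [← Real.exp_nat_mul]
      _ ≤ _ := by
          apply Real.exp_le_exp.mpr
          apply mul_le_mul_of_nonneg_right (le_of_lt hs0lt) hlog2pos.le
  have hrhs : Real.exp (2 + Real.log 2) * Real.exp (-0.0019) ^ n
      = Real.exp (2 + Real.log 2 - 0.0019 * n) := by
    rw [← Real.exp_nat_mul, ← Real.exp_add]
    congr 1
    ring
  have hchoose0 : (0:ℝ) ≤ (n.choose s0 : ℝ) := Nat.cast_nonneg _
  calc (n.choose s0 : ℝ) * 2 ^ s0 * Real.exp (2 - 0.8836 * n)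
      ≤ Real.exp (0.06 * n * (Real.log 17 + 1)) * Real.exp ((0.94 * n + 1) * Real.log 2)
          * Real.exp (2 - 0.8836 * n) := by
        apply mul_le_mul_of_nonneg_right _ (Real.exp_pos _).le
        apply mul_le_mul hchoose h2pow (by positivity) (Real.exp_pos _).le
    _ = Real.exp (0.06 * n * (Real.log 17 + 1) + (0.94 * n + 1) * Real.log 2
          + (2 - 0.8836 * n)) := by
        rw [← Real.exp_add, ← Real.exp_add]
    _ ≤ Real.exp (2 + Real.log 2 - 0.0019 * n) := by
        apply Real.exp_le_exp.mpr
        nlinarith [hN0, hlog2, hlog17, hlog2pos]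
    _ = _ := hrhs.symm

/-- W.h.p. the random graph `G_{n,4/n}` contains no induced bipartite subgraph
on `0.94·n` or more vertices. -/
theorem statement13 :
    Tendsto
      (fun n : ℕ => erProb n (4 / n) (fun G =>
        ∀ S : Finset (Fin n), (0.94 * n : ℝ) ≤ S.card →
          ¬ (G.induce (S : Set (Fin n))).Colorable 2))
      atTop (nhds 1) := by
  set f := fun n : ℕ => erProb n (4 / n) (fun G =>
        ∀ S : Finset (Fin n), (0.94 * n : ℝ) ≤ S.card →
          ¬ (G.induce (S : Set (Fin n))).Colorable 2) with hf
  have hr0 : (0:ℝ) ≤ Real.exp (-0.0019) := (Real.exp_pos _).le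
  have hr1 : Real.exp (-0.0019) < 1 := Real.exp_lt_one_iff.mpr (by norm_num)
  set K := Real.exp (2 + Real.log 2) with hK
  have hg : Tendsto (fun n : ℕ => 1 - K * Real.exp (-0.0019) ^ n) atTop (nhds 1) := by
    have h0 : Tendsto (fun n : ℕ => K * Real.exp (-0.0019) ^ n) atTop (nhds 0) := by
      have := (tendsto_pow_atTop_nhds_zero_of_lt_one hr0 hr1).const_mul K
      simpa using this
    have := Tendsto.sub
      (tendsto_const_nhds : Tendsto (fun _ : ℕ => (1:ℝ)) atTop (nhds 1)) h0
    simpa using this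
  apply tendsto_of_tendsto_of_tendsto_of_le_of_le' hg tendsto_const_nhds
  · filter_upwards [eventually_ge_atTop 1000] with n hn
    have hn4 : 4 ≤ n := by omega
    have h1 := main_bound n hn4
    have h2 := numeric_bound n hn
    have : 1 - f n ≤ K * Real.exp (-0.0019) ^ n := le_trans h1 h2
    linarith
  · filter_upwards [eventually_ge_atTop 4] with n hn
    have hN : (0:ℝ) < n := by
      have : 0 < n := by omega
      exact_mod_cast this
    apply erProb_le_one (by positivity)
    rw [div_le_one hN]
    exact_mod_cast hn
end

section
/- Let G be a finite graph that admits a homomorphism to the cycle C_5. Then there is a partition of V(G) into sets V_0, V_1, V_2, V_3, V_4 such that: (P1) each V_i is an independent set; (P2) for each i there are no edges between V_i and V_{i+2} ∪ V_{i−2} (indices modulo 5); (P3) every vertex v ∈ V_i for i = 1,2,3,4 has a neighbor in V_{i−1}; and (P4) every vertex v ∈ V_2 has a neighbor in V_3. -/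
open SimpleGraph

private def w5 : Fin 5 → ℕ := ![0, 2, 4, 1, 3]

/-- If a finite graph `G` admits a homomorphism to `C_5`, then `V(G)` can be partitioned into
sets `V_0, …, V_4` such that (P1) each `V_i` is independent; (P2) there are no edges between
`V_i` and `V_{i+2} ∪ V_{i-2}` (indices mod 5); (P3) every `v ∈ V_i` for `i = 1,2,3,4` has a
neighbor in `V_{i-1}`; and (P4) every `v ∈ V_2` has a neighbor in `V_3`. -/
theorem statement15 {V : Type*} [Fintype V] (G : SimpleGraph V)
    (h : Nonempty (G →g cycleGraph 5)) :
    ∃ P : Fin 5 → Set V,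
      (∀ v : V, ∃! i : Fin 5, v ∈ P i) ∧
      (∀ i : Fin 5, ∀ u ∈ P i, ∀ v ∈ P i, ¬ G.Adj u v) ∧
      (∀ i : Fin 5, ∀ u ∈ P i, ∀ v, v ∈ P (i + 2) ∪ P (i - 2) → ¬ G.Adj u v) ∧
      (∀ i : Fin 5, i ≠ 0 → ∀ v ∈ P i, ∃ u ∈ P (i - 1), G.Adj v u) ∧
      (∀ v ∈ P 2, ∃ u ∈ P 3, G.Adj v u) := by
  classical
  obtain ⟨f⟩ := h
  set S : Finset (V → Fin 5) :=
    Finset.univ.filter (fun g => ∀ u v, G.Adj u v → (cycleGraph 5).Adj (g u) (g v)) with hS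
  have hfS : (f : V → Fin 5) ∈ S := by
    simp only [hS, Finset.mem_filter, Finset.mem_univ, true_and]
    exact fun u v huv => f.map_adj huv
  obtain ⟨g, hgS, hmin⟩ := S.exists_min_image (fun g => ∑ v, w5 (g v)) ⟨f, hfS⟩
  have hg : ∀ u v, G.Adj u v → (cycleGraph 5).Adj (g u) (g v) := by
    have := hgS
    simpa only [hS, Finset.mem_filter, Finset.mem_univ, true_and] using this
  -- key: cannot improve by moving a single vertex
  have key : ∀ (v : V) (j : Fin 5), w5 j < w5 (g v) →
      (∀ u, G.Adj v u → (cycleGraph 5).Adj j (g u)) → False := by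
    intro v j hw hadj
    set g' := Function.update g v j with hg'
    have hg'S : g' ∈ S := by
      simp only [hS, Finset.mem_filter, Finset.mem_univ, true_and]
      intro a b hab
      rcases eq_or_ne a v with rfl | ha
      · have hb : b ≠ a := (G.ne_of_adj hab).symm
        simpa [hg', Function.update_of_ne hb] using hadj b hab
      · rcases eq_or_ne b v with rfl | hb
        · simpa [hg', Function.update_of_ne ha] using ((hadj a hab.symm).symm)
        · simpa [hg', Function.update_of_ne ha, Function.update_of_ne hb] using hg a b hab
    have hsum : ∑ x, w5 (g' x) < ∑ x, w5 (g x) := by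
      have h1 : ∀ x, w5 (g' x) = Function.update (fun x => w5 (g x)) v (w5 j) x := by
        intro x
        rcases eq_or_ne x v with rfl | hx
        · simp [hg']
        · simp [hg', Function.update_of_ne hx]
      calc ∑ x, w5 (g' x) = ∑ x, Function.update (fun x => w5 (g x)) v (w5 j) x :=
            Finset.sum_congr rfl (fun x _ => h1 x)
        _ = w5 j + ∑ x ∈ Finset.univ \ {v}, w5 (g x) :=
            Finset.sum_update_of_mem (Finset.mem_univ v) _ _
        _ < w5 (g v) + ∑ x ∈ Finset.univ \ {v}, w5 (g x) :=
            Nat.add_lt_add_right hw _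
        _ = ∑ x, w5 (g x) := by
            rw [← Finset.erase_eq]
            exact Finset.add_sum_erase _ (fun x => w5 (g x)) (Finset.mem_univ v)
    exact absurd (hmin g' hg'S) (not_le.2 hsum)
  refine ⟨fun i => {v | g v = i}, ?_, ?_, ?_, ?_, ?_⟩
  · intro v
    exact ⟨g v, rfl, fun j hj => hj.symm⟩
  · rintro i u (rfl : g u = i) v (hv : g v = g u) hadj
    have := hg u v hadj
    rw [hv] at this
    exact (cycleGraph 5).irrefl this
  · rintro i u (rfl : g u = i) v hv hadj
    have hA := hg u v hadj
    rcases hv with hv | hv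
    · rw [Set.mem_setOf_eq.mp hv] at hA
      exact (by decide : ∀ i : Fin 5, ¬ (cycleGraph 5).Adj i (i + 2)) _ hA
    · rw [Set.mem_setOf_eq.mp hv] at hA
      exact (by decide : ∀ i : Fin 5, ¬ (cycleGraph 5).Adj i (i - 2)) _ hA
  · rintro i hi v (rfl : g v = i)
    by_contra hnone
    push_neg at hnone
    refine key v (g v + 2) ?_ ?_
    · exact (by decide : ∀ i : Fin 5, i ≠ 0 → w5 (i + 2) < w5 i) _ hi
    · intro u hu
      have h1 := hg v u hu
      have h2 : g u ≠ g v - 1 := fun he => hnone u he hu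
      exact (by decide : ∀ i a : Fin 5, (cycleGraph 5).Adj i a → a ≠ i - 1 →
        (cycleGraph 5).Adj (i + 2) a) _ _ h1 h2
  · rintro v (hv : g v = 2)
    by_contra hnone
    push_neg at hnone
    refine key v 0 ?_ ?_
    · rw [hv]; decide
    · intro u hu
      have h1 := hg v u hu
      rw [hv] at h1
      have h2 : g u ≠ 3 := fun he => hnone u he hu
      exact (by decide : ∀ a : Fin 5, (cycleGraph 5).Adj 2 a → a ≠ 3 →
        (cycleGraph 5).Adj 0 a) _ h1 h2
end
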